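/- Let (c_i)_{i≥1} be real numbers, let φ_i = [[1, 0],[c_i, 1]] ∈ SL(2,ℝ), and fix τ > 0. Then the sequence of matrices (f^{(k)}(τ))_{k≥1} is bounded if and only if every real sequence (q_k)_{k≥0} satisfying the discrete Schrödinger equation q_{k+1} − (2 + τ c_k) q_k + q_{k−1} = 0 for all k ≥ 1 is bounded. -/

import Mathlib

/-!
Write `f_k w = (x_k, y_k)`. One kick-and-drift step reads `x_{k+1} = x_k + τ y_k`,
`y_{k+1} = y_k + c_{k+1} x_{k+1}`, so `y_k = (x_{k+1} - x_k) / τ` and eliminating `y` shows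
that `x` solves the discrete Schrödinger equation. Conversely every solution `q` is the first
coordinate of the orbit of `w = (q_0, (q_1 - q_0) / τ)`. Hence the orbits of all vectors are
bounded iff all solutions are, and the matrices `f_k` are bounded iff their orbits are.
-/

/-- The matrix `h^t = [[1, t],[0, 1]] ∈ SL(2,ℝ)`. -/
def hMat (t : ℝ) : Matrix (Fin 2) (Fin 2) ℝ := !![1, t; 0, 1]

/-- The kicked evolution `f^{(k)}(τ) = φ_k h^τ φ_{k-1} h^τ ⋯ φ_1 h^τ`. -/
def kickedEvol (φ : ℕ → Matrix (Fin 2) (Fin 2) ℝ) (τ : ℝ) :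
    ℕ → Matrix (Fin 2) (Fin 2) ℝ
  | 0 => 1
  | k + 1 => φ (k + 1) * hMat τ * kickedEvol φ τ k

/-- A sequence of matrices is bounded if all its entries are uniformly bounded
(equivalently, it lies in a compact subset). -/
def MatSeqBounded (f : ℕ → Matrix (Fin 2) (Fin 2) ℝ) : Prop :=
  ∃ C : ℝ, ∀ k : ℕ, 1 ≤ k → ∀ i j : Fin 2, |f k i j| ≤ C

open Matrix

def SatisfiesRecurrence (a q : ℕ → ℝ) : Prop :=
  ∀ k : ℕ, 1 ≤ k → q (k + 1) - a k * q k + q (k - 1) = 0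

theorem SatisfiesRecurrence.eq {a p q : ℕ → ℝ} (hp : SatisfiesRecurrence a p)
    (hq : SatisfiesRecurrence a q) (h₀ : p 0 = q 0) (h₁ : p 1 = q 1) (k : ℕ) : p k = q k := by
  suffices ∀ k, p k = q k ∧ p (k + 1) = q (k + 1) from (this k).1
  intro k
  induction k with
  | zero => exact ⟨h₀, h₁⟩
  | succ k ih =>
    refine ⟨ih.2, ?_⟩
    have hpk := hp (k + 1) (by omega)
    have hqk := hq (k + 1) (by omega)
    simp only [Nat.add_sub_cancel] at hpk hqk
    linear_combination hpk - hqk + a (k + 1) * ih.2 - ih.1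

theorem abs_mulVec_apply_le {m n : Type*} [Fintype n] {M : Matrix m n ℝ} {C : ℝ}
    (hM : ∀ i j, |M i j| ≤ C) (w : n → ℝ) (i : m) :
    |(M *ᵥ w) i| ≤ C * ∑ j, |w j| := by
  calc |(M *ᵥ w) i| = |∑ j, M i j * w j| := rfl
    _ ≤ ∑ j, |M i j * w j| := Finset.abs_sum_le_sum_abs _ _
    _ ≤ ∑ j, C * |w j| := by
        gcongr with j
        rw [abs_mul]
        exact mul_le_mul_of_nonneg_right (hM i j) (abs_nonneg _)
    _ = C * ∑ j, |w j| := (Finset.mul_sum _ _ _).symm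

theorem exists_abs_apply_le_of_forall_mulVec {m n : Type*} [Fintype n] [DecidableEq n]
    (f : ℕ → Matrix m n ℝ) (hf : ∀ w : n → ℝ, ∃ D, ∀ k i, |(f k *ᵥ w) i| ≤ D) :
    ∃ C, ∀ k i j, |f k i j| ≤ C := by
  choose D hD using fun j : n => hf (Pi.single j 1)
  refine ⟨∑ j, |D j|, fun k i j => ?_⟩
  calc |f k i j| = |(f k *ᵥ Pi.single j 1) i| := by simp
    _ ≤ |D j| := (hD j k i).trans (le_abs_self _)
    _ ≤ ∑ j, |D j| := Finset.single_le_sum (fun j _ => abs_nonneg (D j)) (Finset.mem_univ j)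

theorem matSeqBounded_kickedEvol_iff (φ : ℕ → Matrix (Fin 2) (Fin 2) ℝ) (τ : ℝ) :
    MatSeqBounded (kickedEvol φ τ) ↔ ∃ C, ∀ k i j, |kickedEvol φ τ k i j| ≤ C := by
  constructor
  · rintro ⟨C, hC⟩
    refine ⟨max C 1, fun k i j => ?_⟩
    rcases Nat.eq_zero_or_pos k with rfl | hk
    · refine le_max_of_le_right ?_
      simp only [kickedEvol, one_apply]
      split_ifs <;> simp
    · exact le_max_of_le_left (hC k hk i j)
  · rintro ⟨C, hC⟩
    exact ⟨C, fun k _ => hC k⟩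

section KickedOrbit

variable {c : ℕ → ℝ} {φ : ℕ → Matrix (Fin 2) (Fin 2) ℝ} {τ : ℝ}

theorem kickedEvol_succ_mulVec_zero (hφ : ∀ i : ℕ, 1 ≤ i → φ i = !![1, 0; c i, 1])
    (k : ℕ) (w : Fin 2 → ℝ) :
    (kickedEvol φ τ (k + 1) *ᵥ w) 0 =
      (kickedEvol φ τ k *ᵥ w) 0 + τ * (kickedEvol φ τ k *ᵥ w) 1 := by
  rw [kickedEvol, hφ (k + 1) (by omega), ← mulVec_mulVec, ← mulVec_mulVec]
  simp [hMat, mulVec, dotProduct, Fin.sum_univ_two]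

theorem kickedEvol_succ_mulVec_one (hφ : ∀ i : ℕ, 1 ≤ i → φ i = !![1, 0; c i, 1])
    (k : ℕ) (w : Fin 2 → ℝ) :
    (kickedEvol φ τ (k + 1) *ᵥ w) 1 =
      c (k + 1) * (kickedEvol φ τ (k + 1) *ᵥ w) 0 + (kickedEvol φ τ k *ᵥ w) 1 := by
  rw [kickedEvol_succ_mulVec_zero hφ, kickedEvol, hφ (k + 1) (by omega), ← mulVec_mulVec,
    ← mulVec_mulVec]
  simp [hMat, mulVec, dotProduct, Fin.sum_univ_two]

theorem satisfiesRecurrence_kickedEvol_mulVec_zero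
    (hφ : ∀ i : ℕ, 1 ≤ i → φ i = !![1, 0; c i, 1]) (w : Fin 2 → ℝ) :
    SatisfiesRecurrence (fun k => 2 + τ * c k) fun k => (kickedEvol φ τ k *ᵥ w) 0 := by
  rintro k hk
  obtain ⟨m, rfl⟩ : ∃ m, k = m + 1 := ⟨k - 1, by omega⟩
  simp only [Nat.add_sub_cancel]
  linear_combination kickedEvol_succ_mulVec_zero hφ (m + 1) w +
    τ * kickedEvol_succ_mulVec_one hφ m w - kickedEvol_succ_mulVec_zero hφ m w

theorem kickedEvol_mulVec_one_eq (hφ : ∀ i : ℕ, 1 ≤ i → φ i = !![1, 0; c i, 1])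
    (hτ : τ ≠ 0) (k : ℕ) (w : Fin 2 → ℝ) :
    (kickedEvol φ τ k *ᵥ w) 1 =
      ((kickedEvol φ τ (k + 1) *ᵥ w) 0 - (kickedEvol φ τ k *ᵥ w) 0) / τ := by
  rw [kickedEvol_succ_mulVec_zero hφ]
  field_simp
  ring

theorem eq_kickedEvol_mulVec_zero (hφ : ∀ i : ℕ, 1 ≤ i → φ i = !![1, 0; c i, 1])
    (hτ : τ ≠ 0) {q : ℕ → ℝ} (hq : SatisfiesRecurrence (fun k => 2 + τ * c k) q)
    (k : ℕ) :
    q k = (kickedEvol φ τ k *ᵥ ![q 0, (q 1 - q 0) / τ]) 0 := by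
  refine hq.eq (satisfiesRecurrence_kickedEvol_mulVec_zero hφ _) ?_ ?_ k
  · simp [kickedEvol]
  · rw [kickedEvol_succ_mulVec_zero hφ]
    simp [kickedEvol, mul_div_cancel₀ _ hτ]

theorem abs_kickedEvol_mulVec_le (hφ : ∀ i : ℕ, 1 ≤ i → φ i = !![1, 0; c i, 1])
    (hτ : τ ≠ 0) {w : Fin 2 → ℝ} {D : ℝ}
    (hD : ∀ k, |(kickedEvol φ τ k *ᵥ w) 0| ≤ D) (k : ℕ) (i : Fin 2) :
    |(kickedEvol φ τ k *ᵥ w) i| ≤ max D (2 * D / |τ|) := by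
  fin_cases i
  · exact le_max_of_le_left (hD k)
  · refine le_max_of_le_right ?_
    rw [Fin.mk_one, kickedEvol_mulVec_one_eq hφ hτ, abs_div,
      div_le_div_iff_of_pos_right (abs_pos.mpr hτ)]
    linarith [abs_sub _ _ |>.trans (add_le_add (hD (k + 1)) (hD k))]

end KickedOrbit

/-- for lower-triangular kicks `φ_i = [[1, 0],[c_i, 1]]` and fixed `τ > 0`,
the kicked evolution is bounded iff every solution of the discrete Schrödinger equation
`q_{k+1} − (2 + τ c_k) q_k + q_{k−1} = 0` (for `k ≥ 1`) is bounded. -/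
theorem stmt_11 (c : ℕ → ℝ) (φ : ℕ → Matrix (Fin 2) (Fin 2) ℝ)
    (hφ : ∀ i : ℕ, 1 ≤ i → φ i = !![1, 0; c i, 1]) (τ : ℝ) (hτ : 0 < τ) :
    MatSeqBounded (kickedEvol φ τ) ↔
      ∀ q : ℕ → ℝ,
        (∀ k : ℕ, 1 ≤ k → q (k + 1) - (2 + τ * c k) * q k + q (k - 1) = 0) →
        ∃ C : ℝ, ∀ k : ℕ, |q k| ≤ C := by
  rw [matSeqBounded_kickedEvol_iff]
  constructor
  · rintro ⟨C, hC⟩ q hq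
    refine ⟨C * ∑ j, |![q 0, (q 1 - q 0) / τ] j|, fun k => ?_⟩
    rw [eq_kickedEvol_mulVec_zero hφ hτ.ne' hq k]
    exact abs_mulVec_apply_le (hC k) _ 0
  · intro hbounded
    refine exists_abs_apply_le_of_forall_mulVec _ fun w => ?_
    obtain ⟨D, hD⟩ := hbounded (fun k => (kickedEvol φ τ k *ᵥ w) 0)
      (satisfiesRecurrence_kickedEvol_mulVec_zero hφ w)
    exact ⟨_, abs_kickedEvol_mulVec_le hφ hτ.ne' hD⟩
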